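/- Suppose β ∈ (0,1), N ≥ 1, ε ≥ 0, t ∈ ℕ, and F_i ∈ [0,1] for i = 1,…,t satisfy N·∏_{i=1}^{t}(1 - (1-β)F_i) ≥ β^ε with each factor positive. Then the expected number of mistakes M = ∑_{i=1}^{t} F_i satisfies M ≤ (log N + ε·log(1/β))/(1-β). -/

import Mathlib

/-! Since `1 - x ≤ exp (-x)`, the product of the weight factors is at most
`exp (-(1 - β) M)`; taking logarithms in `β ^ ε ≤ N exp (-(1 - β) M)` gives
`ε log β ≤ log N - (1 - β) M`. -/

open Real

theorem Finset.prod_one_sub_le_exp_neg_sum {ι : Type*} (s : Finset ι) (x : ι → ℝ)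
    (h : ∀ i ∈ s, 0 ≤ 1 - x i) : ∏ i ∈ s, (1 - x i) ≤ exp (-∑ i ∈ s, x i) := by
  rw [← Finset.sum_neg_distrib, exp_sum]
  exact Finset.prod_le_prod h fun i _ => by linarith [add_one_le_exp (-x i)]

theorem pwmv_mistake_bound_general (β N ε : ℝ) (hβ : β ∈ Set.Ioo (0 : ℝ) 1)
    (hN : 1 ≤ N) (t : ℕ) (F : ℕ → ℝ)
    (hpos : ∀ i ∈ Finset.range t, 0 < 1 - (1 - β) * F i)
    (hweights : β ^ ε ≤ N * ∏ i ∈ Finset.range t, (1 - (1 - β) * F i)) :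
    (∑ i ∈ Finset.range t, F i) ≤ (Real.log N + ε * Real.log (1 / β)) / (1 - β) := by
  obtain ⟨hβ0, hβ1⟩ := hβ
  have hN0 : 0 < N := by linarith
  have hexp : β ^ ε ≤ N * exp (-((1 - β) * ∑ i ∈ Finset.range t, F i)) := by
    refine hweights.trans (mul_le_mul_of_nonneg_left ?_ hN0.le)
    rw [Finset.mul_sum]
    exact Finset.prod_one_sub_le_exp_neg_sum _ _ fun i hi => (hpos i hi).le
  have hlog := log_le_log (rpow_pos_of_pos hβ0 ε) hexp
  rw [log_rpow hβ0, log_mul hN0.ne' (exp_pos _).ne', log_exp] at hlog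
  rw [le_div_iff₀ (by linarith), one_div, log_inv]
  linarith

/-- Mistake bound: from `N * ∏ (1-(1-β)F i) ≥ β^ε` (all factors positive) one gets
`M = ∑ F i ≤ (log N + ε log(1/β)) / (1-β)`. -/
theorem pwmv_mistake_bound (β N ε : ℝ) (hβ : β ∈ Set.Ioo (0 : ℝ) 1)
    (hN : 1 ≤ N) (hε : 0 ≤ ε) (t : ℕ) (F : ℕ → ℝ)
    (hF : ∀ i ∈ Finset.range t, F i ∈ Set.Icc (0 : ℝ) 1)
    (hpos : ∀ i ∈ Finset.range t, 0 < 1 - (1 - β) * F i)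
    (hweights : β ^ ε ≤ N * ∏ i ∈ Finset.range t, (1 - (1 - β) * F i)) :
    (∑ i ∈ Finset.range t, F i) ≤ (Real.log N + ε * Real.log (1 / β)) / (1 - β) :=
  pwmv_mistake_bound_general β N ε hβ hN t F hpos hweights
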